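/- Let G be a finite group, α an automorphism of G and x ∈ G. Then ord(A_{x,α}) = ord(α) · ord(sh_α(x)), where sh_α(x) := x · α(x) · α²(x) ⋯ α^{ord(α)−1}(x). -/

import Mathlib

/-- The bijective affine map `A_{x,α} : g ↦ x * α g` as a permutation of `G`. -/
def Aff {G : Type*} [Group G] (x : G) (α : G ≃* G) : Equiv.Perm G :=
  α.toEquiv.trans (Equiv.mulLeft x)

/-- `sh_α(x) := x * α(x) * α²(x) * ⋯ * α^(ord(α)-1)(x)`. -/
noncomputable def sh {G : Type*} [Group G] (α : MulAut G) (x : G) : G :=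
  ((List.range (orderOf α)).map fun i => (α ^ i) x).prod

/-!
The `n`-th power of `A_{x,α}` is again affine: `A^n g = x_n * αⁿ g` with the twisted power
`x_n = x * α(x) * ⋯ * α^(n-1)(x)`. Hence `A^n = 1` iff `αⁿ = 1` and `x_n = 1`. The first condition
forces `n = ord(α) * k`, and since `α^ord(α) = 1` the twisted power is then `sh_α(x)^k`.
-/

section

variable {G : Type*} [Group G]

noncomputable def twistedPow (α : MulAut G) (x : G) (n : ℕ) : G :=
  ((List.range n).map fun i => (α ^ i) x).prod

@[simp]
lemma Aff_apply (x : G) (α : MulAut G) (g : G) : Aff x α g = x * α g := rfl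

@[simp]
lemma twistedPow_zero (α : MulAut G) (x : G) : twistedPow α x 0 = 1 := rfl

lemma twistedPow_succ (α : MulAut G) (x : G) (n : ℕ) :
    twistedPow α x (n + 1) = twistedPow α x n * (α ^ n) x :=
  List.prod_range_succ _ n

lemma twistedPow_add (α : MulAut G) (x : G) (m n : ℕ) :
    twistedPow α x (m + n) = twistedPow α x m * (α ^ m) (twistedPow α x n) := by
  induction n with
  | zero => simp
  | succ n ih => rw [← add_assoc, twistedPow_succ, ih, twistedPow_succ, map_mul, mul_assoc,
      pow_add, MulAut.mul_apply]

lemma twistedPow_orderOf (α : MulAut G) (x : G) : twistedPow α x (orderOf α) = sh α x := rfl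

lemma twistedPow_orderOf_mul (α : MulAut G) (x : G) (k : ℕ) :
    twistedPow α x (orderOf α * k) = sh α x ^ k := by
  induction k with
  | zero => simp
  | succ k ih =>
    rw [mul_add_one, twistedPow_add, ih, pow_mul, pow_orderOf_eq_one, one_pow, pow_succ,
      MulAut.one_apply, twistedPow_orderOf]

lemma Aff_pow_apply (x : G) (α : MulAut G) (n : ℕ) (g : G) :
    (Aff x α ^ n) g = twistedPow α x n * (α ^ n) g := by
  induction n generalizing g with
  | zero => simp
  | succ n ih => rw [pow_succ, Equiv.Perm.mul_apply, Aff_apply, ih, twistedPow_succ, map_mul,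
      pow_succ, MulAut.mul_apply, mul_assoc]

lemma Aff_pow_eq_one_iff (x : G) (α : MulAut G) (n : ℕ) :
    Aff x α ^ n = 1 ↔ twistedPow α x n = 1 ∧ α ^ n = 1 := by
  constructor
  · intro h
    have hfix (g : G) : twistedPow α x n * (α ^ n) g = g := by
      rw [← Aff_pow_apply, h, Equiv.Perm.one_apply]
    have htw : twistedPow α x n = 1 := by simpa using hfix 1
    refine ⟨htw, MulEquiv.ext fun g => ?_⟩
    simpa [htw] using hfix g
  · rintro ⟨htw, hα⟩
    ext g
    simp [Aff_pow_apply, htw, hα]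

lemma Aff_pow_orderOf_mul_eq_one_iff (x : G) (α : MulAut G) (k : ℕ) :
    Aff x α ^ (orderOf α * k) = 1 ↔ sh α x ^ k = 1 := by
  rw [Aff_pow_eq_one_iff, twistedPow_orderOf_mul, pow_mul, pow_orderOf_eq_one, one_pow,
    and_iff_left rfl]

end

theorem stmt_10_general {G : Type*} [Group G] (α : MulAut G) (x : G) :
    orderOf (Aff x α) = orderOf α * orderOf (sh α x) := by
  obtain ⟨k, hk⟩ : orderOf α ∣ orderOf (Aff x α) :=
    orderOf_dvd_of_pow_eq_one ((Aff_pow_eq_one_iff x α _).1 (pow_orderOf_eq_one _)).2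
  apply Nat.dvd_antisymm
  · exact orderOf_dvd_of_pow_eq_one
      ((Aff_pow_orderOf_mul_eq_one_iff x α _).2 (pow_orderOf_eq_one _))
  · have hsh : sh α x ^ k = 1 := by
      rw [← Aff_pow_orderOf_mul_eq_one_iff, ← hk, pow_orderOf_eq_one]
    rw [hk]
    exact mul_dvd_mul_left _ (orderOf_dvd_of_pow_eq_one hsh)

theorem stmt_10 {G : Type*} [Group G] [Fintype G] (α : MulAut G) (x : G) :
    orderOf (Aff x α) = orderOf α * orderOf (sh α x) :=
  stmt_10_general α x
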